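/- arXiv:1912.02933 — 2 statements merged into one kernel-verified Lean document; each statement's English description precedes it below -/
import Mathlib

section
/- If E[X_i² X | Y] = E[X|Y] E[X_i²|Y] + 2 E[X_i|Y](E[X_i X|Y] − E[X_i|Y]E[X|Y]) for all i = 1,…,M, then E[‖X‖₂² X | Y] − E[‖X‖₂² | Y] E[X|Y] = 2 Σ_{X|Y} E[X|Y], almost surely. -/
/-!
Summing the hypothesis over `i` turns the left-hand side into
`∑ᵢ (E[Xᵢ² Xⱼ|Y] − E[Xᵢ²|Y] E[Xⱼ|Y])`, that is
`2 ∑ᵢ E[Xᵢ|Y] (E[Xᵢ Xⱼ|Y] − E[Xᵢ|Y] E[Xⱼ|Y])`,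
and the bracket is the entry `(j, i)` of `Σ_{X|Y}` by the conditional covariance formula
`E[(f − E[f|Y])(g − E[g|Y]) | Y] = E[f g|Y] − E[f|Y] E[g|Y]`. The third moment of `‖X‖₂`
dominates every product `Xᵢ² Xⱼ`, so all conditional expectations involved are of integrable
functions.
-/


open MeasureTheory Matrix

noncomputable section

/-- Squared Euclidean norm of a vector in `ℝ^M`. -/
def sqn {M : ℕ} (v : Fin M → ℝ) : ℝ := ∑ i, v i ^ 2

/-- Euclidean norm of a vector in `ℝ^M`. -/
def enorm2 {M : ℕ} (v : Fin M → ℝ) : ℝ := Real.sqrt (∑ i, v i ^ 2)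

/-- Posterior covariance matrix `Σ_{X|Y} = E[(X − E[X|Y])(X − E[X|Y])ᵀ | Y]`, defined
entrywise, with `m` playing the role of `σ(Y)`. -/
def postCov {Ω : Type*} {m0 : MeasurableSpace Ω} (m : MeasurableSpace Ω) (μ : @Measure Ω m0)
    {M : ℕ} (X : Ω → Fin M → ℝ) : Ω → Matrix (Fin M) (Fin M) ℝ :=
  fun ω => Matrix.of fun i j =>
    (μ[(fun ω' => (X ω' i - (μ[(fun ω'' => X ω'' i)|m]) ω') *
        (X ω' j - (μ[(fun ω'' => X ω'' j)|m]) ω'))|m]) ω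

section CondExp

variable {Ω : Type*} {m m₀ : MeasurableSpace Ω} {μ : Measure Ω}

lemma condExp_fintype_sum {E ι : Type*} [NormedAddCommGroup E] [NormedSpace ℝ E]
    [CompleteSpace E] [Fintype ι] {F : ι → Ω → E} (hF : ∀ i, Integrable (F i) μ) :
    μ[fun ω => ∑ i, F i ω | m] =ᵐ[μ] fun ω => ∑ i, (μ[F i | m]) ω := by
  filter_upwards [condExp_finsetSum (fun i _ => hF i) m] with ω hω
  simpa only [Finset.sum_fn, Finset.sum_apply] using hω

lemma condExp_sub_condExp_mul_sub_condExp_ae_eq (hm : m ≤ m₀) [IsFiniteMeasure μ]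
    {f g : Ω → ℝ} (hf : MemLp f 2 μ) (hg : MemLp g 2 μ) :
    μ[(f - μ[f | m]) * (g - μ[g | m]) | m] =ᵐ[μ] μ[f * g | m] - μ[f | m] * μ[g | m] := by
  set F := μ[f | m]
  set G := μ[g | m]
  have hF : MemLp F 2 μ := hf.condExp one_le_two
  have hG : MemLp G 2 μ := hg.condExp one_le_two
  have hfg := hf.integrable_mul hg
  have hFg := hF.integrable_mul hg
  have hGf := hG.integrable_mul hf
  have hFG := hF.integrable_mul hG
  have hexpand : (f - F) * (g - G) = f * g - F * g - (G * f - F * G) := by ring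
  rw [hexpand]
  filter_upwards [condExp_sub (hfg.sub hFg) (hGf.sub hFG) m, condExp_sub hfg hFg m,
    condExp_sub hGf hFG m,
    condExp_mul_of_stronglyMeasurable_left stronglyMeasurable_condExp hFg
      (hg.integrable one_le_two),
    condExp_mul_of_stronglyMeasurable_left stronglyMeasurable_condExp hGf
      (hf.integrable one_le_two)]
    with ω h₁ h₂ h₃ h₄ h₅
  have h₆ : μ[F * G | m] = F * G :=
    condExp_of_stronglyMeasurable hm (stronglyMeasurable_condExp.mul stronglyMeasurable_condExp) hFG
  simp only [Pi.sub_apply, Pi.mul_apply] at h₁ h₂ h₃ h₄ h₅ ⊢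
  rw [h₁, h₂, h₃, h₄, h₅, h₆]
  simp only [Pi.mul_apply]
  ring

end CondExp

lemma abs_le_enorm2 {M : ℕ} (v : Fin M → ℝ) (i : Fin M) : |v i| ≤ enorm2 v := by
  rw [← Real.sqrt_sq_eq_abs]
  exact Real.sqrt_le_sqrt (Finset.single_le_sum (f := fun i => v i ^ 2)
    (fun i _ => sq_nonneg _) (Finset.mem_univ i))

lemma abs_sq_mul_le_enorm2_pow_three {M : ℕ} (v : Fin M → ℝ) (i j : Fin M) :
    |v i ^ 2 * v j| ≤ enorm2 v ^ 3 := by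
  calc |v i ^ 2 * v j| = |v i| ^ 2 * |v j| := by rw [abs_mul, abs_pow]
    _ ≤ enorm2 v ^ 2 * enorm2 v := by gcongr <;> exact abs_le_enorm2 v _
    _ = enorm2 v ^ 3 := by ring

section RandomVector

variable {Ω : Type*} [MeasurableSpace Ω] {μ : Measure Ω} {M : ℕ} {X : Ω → Fin M → ℝ}

lemma memLp_enorm2_three (hXmeas : ∀ i, AEMeasurable (fun ω => X ω i) μ)
    (hX3 : Integrable (fun ω => enorm2 (X ω) ^ 3) μ) :
    MemLp (fun ω => enorm2 (X ω)) 3 μ := by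
  have hmeas : AEStronglyMeasurable (fun ω => enorm2 (X ω)) μ := by
    unfold enorm2
    fun_prop
  rw [← integrable_norm_rpow_iff hmeas (by norm_num) (by norm_num)]
  refine hX3.congr (Filter.Eventually.of_forall fun ω => ?_)
  simp [Real.norm_eq_abs, abs_of_nonneg (Real.sqrt_nonneg _), enorm2]

lemma memLp_component_of_le_three [IsFiniteMeasure μ]
    (hXmeas : ∀ i, AEMeasurable (fun ω => X ω i) μ)
    (hX3 : Integrable (fun ω => enorm2 (X ω) ^ 3) μ) {p : ENNReal} (hp : p ≤ 3) (i : Fin M) :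
    MemLp (fun ω => X ω i) p μ :=
  ((memLp_enorm2_three hXmeas hX3).of_le (hXmeas i).aestronglyMeasurable
    (Filter.Eventually.of_forall fun ω => by
      simpa [Real.norm_eq_abs, abs_of_nonneg (Real.sqrt_nonneg _), enorm2] using
        abs_le_enorm2 (X ω) i)).mono_exponent hp

end RandomVector

/-- If, for all `i = 1,…,M`,
`E[X_i² X|Y] = E[X|Y] E[X_i²|Y] + 2 E[X_i|Y](E[X_i X|Y] − E[X_i|Y] E[X|Y])` (a.s.,
componentwise), then `E[‖X‖₂² X|Y] − E[‖X‖₂²|Y] E[X|Y] = 2 Σ_{X|Y} E[X|Y]` almost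
surely (`m` plays the role of `σ(Y)`). -/
theorem stmt11 {Ω : Type*} (m : MeasurableSpace Ω) [m0 : MeasurableSpace Ω] (hm : m ≤ m0)
    (μ : Measure Ω) [IsProbabilityMeasure μ] {M : ℕ}
    (X : Ω → Fin M → ℝ)
    (hXmeas : ∀ i, AEMeasurable (fun ω => X ω i) μ)
    (hX3 : Integrable (fun ω => enorm2 (X ω) ^ 3) μ)
    (hiden : ∀ i j : Fin M,
      (μ[(fun ω => X ω i ^ 2 * X ω j)|m]) =ᵐ[μ]
        fun ω => (μ[(fun ω' => X ω' j)|m]) ω * (μ[(fun ω' => X ω' i ^ 2)|m]) ω +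
          2 * (μ[(fun ω' => X ω' i)|m]) ω *
            ((μ[(fun ω' => X ω' i * X ω' j)|m]) ω -
              (μ[(fun ω' => X ω' i)|m]) ω * (μ[(fun ω' => X ω' j)|m]) ω)) :
    ∀ j : Fin M,
      (fun ω => (μ[(fun ω' => sqn (X ω') * X ω' j)|m]) ω -
          (μ[(fun ω' => sqn (X ω'))|m]) ω * (μ[(fun ω' => X ω' j)|m]) ω) =ᵐ[μ]
        fun ω => 2 * ((postCov m μ X ω).mulVec (fun i => (μ[(fun ω' => X ω' i)|m]) ω)) j := by
  have hL2 : ∀ i, MemLp (fun ω => X ω i) 2 μ :=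
    memLp_component_of_le_three hXmeas hX3 (by norm_num)
  intro j
  have hcubic : μ[fun ω => sqn (X ω) * X ω j | m] =ᵐ[μ]
      fun ω => ∑ i, (μ[fun ω' => X ω' i ^ 2 * X ω' j | m]) ω := by
    simp only [sqn, Finset.sum_mul]
    refine condExp_fintype_sum fun i => hX3.mono' ?_ (ae_of_all _ fun ω => ?_)
    · exact (((hXmeas i).pow_const 2).mul (hXmeas j)).aestronglyMeasurable
    · exact abs_sq_mul_le_enorm2_pow_three (X ω) i j
  have hsqn : μ[fun ω => sqn (X ω) | m] =ᵐ[μ]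
      fun ω => ∑ i, (μ[fun ω' => X ω' i ^ 2 | m]) ω :=
    condExp_fintype_sum fun i => (hL2 i).integrable_sq
  have hcov : ∀ i, (fun ω => postCov m μ X ω j i) =ᵐ[μ]
      fun ω => (μ[fun ω' => X ω' i * X ω' j | m]) ω -
        (μ[fun ω' => X ω' j | m]) ω * (μ[fun ω' => X ω' i | m]) ω := by
    intro i
    have h := condExp_sub_condExp_mul_sub_condExp_ae_eq hm (hL2 j) (hL2 i)
    rw [mul_comm (fun ω => X ω j)] at h
    exact h
  filter_upwards [hcubic, hsqn, ae_all_iff.2 hcov, ae_all_iff.2 fun i => hiden i j]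
    with ω h₁ h₂ h₃ h₄
  simp only [mulVec, dotProduct]
  rw [h₁, h₂, Finset.sum_mul, ← Finset.sum_sub_distrib, Finset.mul_sum]
  refine Finset.sum_congr rfl fun i _ => ?_
  rw [h₄ i, h₃ i]
  ring
end
end

section
/- The map X̂ ↦ E[V_Y[‖X − X̂‖₂²]] = E[V_Y[‖X‖₂²]] + 4E[X̂ᵀΣ_{X|Y}X̂] − 4E[(E[‖X‖₂²X|Y] − E[‖X‖₂²|Y]E[X|Y])ᵀX̂] is a convex function on L²(σ(Y); R^M), being a sum of a constant, a nonnegative quadratic form, and a linear functional. -/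
open MeasureTheory Matrix

noncomputable section

/-- Conditional (predictive) variance `V_Y[Z] = E[(Z − E[Z|Y])² | Y]`. -/
def condVar' {Ω : Type*} {m0 : MeasurableSpace Ω} (m : MeasurableSpace Ω) (μ : @Measure Ω m0)
    (Z : Ω → ℝ) : Ω → ℝ :=
  μ[(fun ω => (Z ω - (μ[Z|m]) ω) ^ 2)|m]

/-!
With `B = X - E[X|m]` and `A = ‖X‖² - E[‖X‖²|m]`, expanding `‖X - X̂‖²` and pulling the
`m`-measurable `X̂` out of the conditional expectations shows that the centred loss is
`A - 2 ⟪X̂, B⟫`, so the objective is `∫ (A - 2 ⟪X̂, B⟫)²`: the convex map `g ↦ ∫ (A - g)²`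
on `L²` composed with the linear map `X̂ ↦ 2 ⟪X̂, B⟫`. The condition `E[X̂ᵀ Σ X̂] < ∞` puts
`⟪X̂, B⟫` in `L²`, because `E[⟪X̂, B⟫²] = E[X̂ᵀ Σ X̂]` on the sets where `X̂` is bounded, and
`Σ = E[B Bᵀ|m]` is almost surely positive semidefinite, which makes the domain convex.
-/

lemma sq_apply_le_one_add_enorm2_pow_three {M : ℕ} (v : Fin M → ℝ) (i : Fin M) :
    v i ^ 2 ≤ 1 + enorm2 v ^ 3 := by
  have hsq : v i ^ 2 ≤ enorm2 v ^ 2 := by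
    rw [enorm2, Real.sq_sqrt (Finset.sum_nonneg fun j _ => sq_nonneg (v j))]
    exact Finset.single_le_sum (fun j _ => sq_nonneg (v j)) (Finset.mem_univ i)
  have h0 : 0 ≤ enorm2 v := Real.sqrt_nonneg _
  nlinarith [mul_nonneg (sq_nonneg (enorm2 v - 1)) (by linarith : 0 ≤ enorm2 v + 1)]

lemma sqn_sub {M : ℕ} (x y : Fin M → ℝ) : sqn (x - y) = sqn x - 2 * (y ⬝ᵥ x) + sqn y := by
  simp only [sqn, dotProduct, Finset.mul_sum, Pi.sub_apply, ← Finset.sum_sub_distrib,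
    ← Finset.sum_add_distrib]
  exact Finset.sum_congr rfl fun i _ => by ring

namespace Matrix

variable {ι : Type*} [Fintype ι]

lemma dotProduct_mulVec_self_eq_sum (A : Matrix ι ι ℝ) (x : ι → ℝ) :
    x ⬝ᵥ A *ᵥ x = ∑ p : ι × ι, x p.1 * x p.2 * A p.1 p.2 := by
  simp only [dotProduct, mulVec, Finset.mul_sum, Fintype.sum_prod_type]
  exact Finset.sum_congr rfl fun i _ => Finset.sum_congr rfl fun j _ => by ring

lemma dotProduct_sq_eq_sum (x y : ι → ℝ) :
    (x ⬝ᵥ y) ^ 2 = ∑ p : ι × ι, x p.1 * x p.2 * (y p.1 * y p.2) := by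
  rw [sq, dotProduct, Finset.sum_mul_sum, Fintype.sum_prod_type]
  exact Finset.sum_congr rfl fun i _ => Finset.sum_congr rfl fun j _ => by ring

lemma PosSemidef.convexOn_dotProduct_mulVec_self {A : Matrix ι ι ℝ} (hA : A.PosSemidef) :
    ConvexOn ℝ Set.univ fun x : ι → ℝ => x ⬝ᵥ A *ᵥ x := by
  refine ⟨convex_univ, fun x _ y _ a b ha hb hab => ?_⟩
  obtain rfl : b = 1 - a := by linarith
  have hxy := hA.dotProduct_mulVec_nonneg (x - y)
  simp only [star_trivial, mulVec_add, mulVec_sub, mulVec_smul, dotProduct_add,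
    dotProduct_sub, add_dotProduct, sub_dotProduct, dotProduct_smul, smul_dotProduct,
    smul_eq_mul] at hxy ⊢
  nlinarith [mul_nonneg (mul_nonneg ha hb) hxy]

end Matrix

lemma ae_forall_of_isClosed {α E : Type*} {_ : MeasurableSpace α} {μ : Measure α}
    [TopologicalSpace E] [TopologicalSpace.SeparableSpace E] {P : α → E → Prop}
    (hP : ∀ a, IsClosed {x | P a x}) (h : ∀ x, ∀ᵐ a ∂μ, P a x) : ∀ᵐ a ∂μ, ∀ x, P a x := by
  obtain ⟨s, hs, hdense⟩ := TopologicalSpace.exists_countable_dense E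
  filter_upwards [(ae_ball_iff hs).2 fun x _ => h x] with a ha x
  exact (hP a).closure_subset_iff.2 (fun y hy => ha y hy) (hdense.closure_eq ▸ Set.mem_univ x)

lemma integrable_of_setIntegral_le_of_monotone {α : Type*} {_ : MeasurableSpace α}
    {μ : Measure α} {f : α → ℝ} (hf : AEStronglyMeasurable f μ) (hf0 : ∀ a, 0 ≤ f a)
    {s : ℕ → Set α} (hs : Monotone s) (hsU : ⋃ n, s n = Set.univ)
    (hfs : ∀ n, IntegrableOn f (s n) μ) {C : ℝ} (hC : ∀ n, ∫ a in s n, f a ∂μ ≤ C) :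
    Integrable f μ := by
  refine ⟨hf, (hasFiniteIntegral_iff_ofReal (ae_of_all _ hf0)).2 ?_⟩
  have hsup : ∫⁻ a, ENNReal.ofReal (f a) ∂μ = ⨆ n, ∫⁻ a in s n, ENNReal.ofReal (f a) ∂μ := by
    rw [← setLIntegral_iUnion_of_directed _ hs.directed_le, hsU, Measure.restrict_univ]
  rw [hsup]
  refine lt_of_le_of_lt (iSup_le fun n => ?_) (ENNReal.ofReal_lt_top (r := C))
  rw [← ofReal_integral_eq_lintegral_ofReal (hfs n) (ae_of_all _ fun a => hf0 a)]
  exact ENNReal.ofReal_le_ofReal (hC n)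

lemma convexOn_integral_sq_sub {α : Type*} {_ : MeasurableSpace α} {μ : Measure α}
    {A : α → ℝ} (hA : AEStronglyMeasurable A μ) :
    ConvexOn ℝ {g : α → ℝ | MemLp g 2 μ} fun g => ∫ a, (A a - g a) ^ 2 ∂μ := by
  have hconv : Convex ℝ {g : α → ℝ | MemLp g 2 μ} := fun f hf g hg a b _ _ _ =>
    (hf.const_smul a).add (hg.const_smul b)
  by_cases hA2 : MemLp A 2 μ
  · have hsq : ∀ g : α → ℝ, MemLp g 2 μ → Integrable (fun a => (A a - g a) ^ 2) μ :=
      fun g hg => (hA2.sub hg).integrable_sq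
    refine ⟨hconv, fun f hf g hg a b ha hb hab => ?_⟩
    calc ∫ x, (A x - (a • f + b • g) x) ^ 2 ∂μ
        ≤ ∫ x, (a * (A x - f x) ^ 2 + b * (A x - g x) ^ 2) ∂μ := by
          refine integral_mono (hsq _ (hconv hf hg ha hb hab))
            (((hsq f hf).const_mul a).add ((hsq g hg).const_mul b)) fun x => ?_
          obtain rfl : b = 1 - a := by linarith
          simp only [Pi.add_apply, Pi.smul_apply, smul_eq_mul]
          nlinarith [mul_nonneg (mul_nonneg ha hb) (sq_nonneg (f x - g x))]
      _ = a • ∫ x, (A x - f x) ^ 2 ∂μ + b • ∫ x, (A x - g x) ^ 2 ∂μ := by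
          rw [integral_add ((hsq f hf).const_mul a) ((hsq g hg).const_mul b),
            integral_const_mul, integral_const_mul]
          rfl
  · -- no `g ∈ L²` makes `(A - g) ^ 2` integrable, so every integral is the junk value `0`
    refine (convexOn_const 0 hconv).congr fun g hg => (integral_undef fun hint => hA2 ?_).symm
    have hAg : MemLp (fun a => A a - g a) 2 μ :=
      (memLp_two_iff_integrable_sq (hA.sub hg.1)).2 hint
    rw [show A = (fun a => A a - g a) + g by ext; simp]
    exact hAg.add hg

section CondMoments

variable {Ω ι : Type*} [Fintype ι] {m m0 : MeasurableSpace Ω}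

def condCenter (m : MeasurableSpace Ω) (μ : Measure[m0] Ω) (X : Ω → ι → ℝ) : Ω → ι → ℝ :=
  fun ω i => X ω i - (μ[fun ω' => X ω' i|m]) ω

def condMomentMatrix (m : MeasurableSpace Ω) (μ : Measure[m0] Ω) (B : Ω → ι → ℝ) :
    Ω → Matrix ι ι ℝ :=
  fun ω => Matrix.of fun i j => (μ[fun ω' => B ω' i * B ω' j|m]) ω

def pointwiseDotProductₗ (B : Ω → ι → ℝ) : (Ω → ι → ℝ) →ₗ[ℝ] Ω → ℝ where
  toFun v ω := v ω ⬝ᵥ B ω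
  map_add' v w := funext fun ω => add_dotProduct (v ω) (w ω) (B ω)
  map_smul' c v := funext fun ω => smul_dotProduct c (v ω) (B ω)

lemma postCov_eq_condMomentMatrix (m : MeasurableSpace Ω) (μ : Measure[m0] Ω) {M : ℕ}
    (X : Ω → Fin M → ℝ) : postCov m μ X = condMomentMatrix m μ (condCenter m μ X) := rfl

variable {μ : Measure Ω} {B : Ω → ι → ℝ}

lemma memLp_two_dotProduct_of_bounded (hB : ∀ i, MemLp (fun ω => B ω i) 2 μ)
    {w : Ω → ι → ℝ} (hw : AEStronglyMeasurable w μ) {c : ℝ} (hwc : ∀ ω, ‖w ω‖ ≤ c) :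
    MemLp (fun ω => w ω ⬝ᵥ B ω) 2 μ := by
  have hwi : ∀ i, MemLp (fun ω => w ω i) ⊤ μ := fun i =>
    memLp_top_of_bound (by fun_prop) c
      (ae_of_all _ fun ω => (norm_le_pi_norm (w ω) i).trans (hwc ω))
  simp only [dotProduct]
  exact memLp_finsetSum _ fun i _ => (hB i).mul' (hwi i)

lemma condExp_dotProduct_sq_ae_eq (hm : m ≤ m0) (hB : ∀ i, MemLp (fun ω => B ω i) 2 μ)
    {w : Ω → ι → ℝ} (hw : StronglyMeasurable[m] w) {c : ℝ} (hwc : ∀ ω, ‖w ω‖ ≤ c) :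
    μ[fun ω => (w ω ⬝ᵥ B ω) ^ 2|m] =ᵐ[μ] fun ω => w ω ⬝ᵥ condMomentMatrix m μ B ω *ᵥ w ω := by
  have hBB : ∀ p : ι × ι, Integrable (fun ω => B ω p.1 * B ω p.2) μ := fun p =>
    (hB p.1).integrable_mul (hB p.2)
  have hww : ∀ p : ι × ι, StronglyMeasurable[m] fun ω => w ω p.1 * w ω p.2 := fun p => by
    have := hw.measurable
    fun_prop
  have hww_le : ∀ (p : ι × ι) ω, ‖w ω p.1 * w ω p.2‖ ≤ c * c := fun p ω => by
    rw [norm_mul]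
    exact mul_le_mul ((norm_le_pi_norm _ _).trans (hwc ω)) ((norm_le_pi_norm _ _).trans (hwc ω))
      (norm_nonneg _) ((norm_nonneg _).trans (hwc ω))
  have hterm : ∀ p : ι × ι,
      Integrable (fun ω => w ω p.1 * w ω p.2 * (B ω p.1 * B ω p.2)) μ := fun p =>
    (hBB p).bdd_mul ((hww p).mono hm).aestronglyMeasurable (ae_of_all _ (hww_le p))
  have hsum : (fun ω => (w ω ⬝ᵥ B ω) ^ 2)
      = ∑ p : ι × ι, fun ω => w ω p.1 * w ω p.2 * (B ω p.1 * B ω p.2) := by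
    ext ω
    rw [Finset.sum_apply, dotProduct_sq_eq_sum]
  have hpull : ∀ p : ι × ι, μ[fun ω => w ω p.1 * w ω p.2 * (B ω p.1 * B ω p.2)|m]
      =ᵐ[μ] fun ω => w ω p.1 * w ω p.2 * (μ[fun ω => B ω p.1 * B ω p.2|m]) ω := fun p =>
    condExp_mul_of_stronglyMeasurable_left (hww p) (hterm p) (hBB p)
  rw [hsum]
  filter_upwards [condExp_finsetSum (fun p _ => hterm p) m, ae_all_iff.2 hpull] with ω hsum hω
  rw [hsum, Finset.sum_apply, dotProduct_mulVec_self_eq_sum]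
  exact Finset.sum_congr rfl fun p _ => hω p

lemma ae_posSemidef_condMomentMatrix (hm : m ≤ m0) (hB : ∀ i, MemLp (fun ω => B ω i) 2 μ) :
    ∀ᵐ ω ∂μ, (condMomentMatrix m μ B ω).PosSemidef := by
  have hherm : ∀ ω, (condMomentMatrix m μ B ω).IsHermitian := fun ω => by
    ext i j
    simp only [condMomentMatrix, conjTranspose_apply, of_apply, star_trivial, mul_comm]
  have hnonneg : ∀ x : ι → ℝ, ∀ᵐ ω ∂μ, 0 ≤ x ⬝ᵥ condMomentMatrix m μ B ω *ᵥ x := fun x => by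
    filter_upwards [condExp_dotProduct_sq_ae_eq hm hB (stronglyMeasurable_const (b := x))
      (fun _ => le_rfl), condExp_nonneg (ae_of_all _ fun ω => sq_nonneg (x ⬝ᵥ B ω))] with ω h1 h2
    exact h1 ▸ h2
  filter_upwards [ae_forall_of_isClosed (fun ω => isClosed_le continuous_const (by fun_prop))
    hnonneg] with ω hω
  exact .of_dotProduct_mulVec_nonneg (hherm ω) fun x => by simpa only [star_trivial] using hω x

lemma memLp_two_dotProduct_of_integrable_dotProduct_mulVec (hm : m ≤ m0) [IsFiniteMeasure μ]
    (hB : ∀ i, MemLp (fun ω => B ω i) 2 μ) {v : Ω → ι → ℝ} (hv : StronglyMeasurable[m] v)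
    (hQ : Integrable (fun ω => v ω ⬝ᵥ condMomentMatrix m μ B ω *ᵥ v ω) μ) :
    MemLp (fun ω => v ω ⬝ᵥ B ω) 2 μ := by
  set Q := fun ω => v ω ⬝ᵥ condMomentMatrix m μ B ω *ᵥ v ω
  have hvB : AEStronglyMeasurable (fun ω => v ω ⬝ᵥ B ω) μ := by
    have := (hv.mono hm).aestronglyMeasurable (μ := μ)
    have := fun i => (hB i).aestronglyMeasurable
    simp only [dotProduct]
    fun_prop
  rw [memLp_two_iff_integrable_sq hvB]
  set s : ℕ → Set Ω := fun n => {ω | ‖v ω‖ ≤ n}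
  have hs : ∀ n, MeasurableSet[m] (s n) := fun n =>
    hv.norm.measurable measurableSet_Iic
  have htrunc : ∀ n, IntegrableOn (fun ω => (v ω ⬝ᵥ B ω) ^ 2) (s n) μ ∧
      ∫ ω in s n, (v ω ⬝ᵥ B ω) ^ 2 ∂μ = ∫ ω in s n, Q ω ∂μ := fun n => by
    set w := (s n).indicator v
    have hw : StronglyMeasurable[m] w := hv.indicator (hs n)
    have hwc : ∀ ω, ‖w ω‖ ≤ n := fun ω => by
      by_cases h : ω ∈ s n
      · simp only [w, Set.indicator_of_mem h]
        exact h
      · simp [w, h]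
    have hsq : (fun ω => (w ω ⬝ᵥ B ω) ^ 2) = (s n).indicator fun ω => (v ω ⬝ᵥ B ω) ^ 2 := by
      ext ω; by_cases h : ω ∈ s n <;> simp [w, h]
    have hQw : (fun ω => w ω ⬝ᵥ condMomentMatrix m μ B ω *ᵥ w ω) = (s n).indicator Q := by
      ext ω; by_cases h : ω ∈ s n <;> simp [w, Q, h]
    refine ⟨?_, ?_⟩
    · rw [← integrable_indicator_iff (hm _ (hs n)), ← hsq]
      exact (memLp_two_dotProduct_of_bounded hB (hw.mono hm).aestronglyMeasurable hwc).integrable_sq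
    · rw [← integral_indicator (hm _ (hs n)), ← integral_indicator (hm _ (hs n)), ← hsq, ← hQw,
        ← integral_condExp hm]
      exact integral_congr_ae (condExp_dotProduct_sq_ae_eq hm hB hw hwc)
  refine integrable_of_setIntegral_le_of_monotone (hvB.pow 2) (fun ω => sq_nonneg _)
    (fun a b hab ω (hω : ‖v ω‖ ≤ a) => hω.trans (Nat.cast_le.2 hab))
    (Set.eq_univ_of_forall fun ω => Set.mem_iUnion.2 ⟨⌈‖v ω‖⌉₊, (Nat.le_ceil _ : ‖v ω‖ ≤ _)⟩)
    (fun n => (htrunc n).1) (C := ∫ ω, |Q ω| ∂μ) fun n => ?_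
  calc ∫ ω in s n, (v ω ⬝ᵥ B ω) ^ 2 ∂μ = ∫ ω in s n, Q ω ∂μ := (htrunc n).2
    _ ≤ ∫ ω in s n, |Q ω| ∂μ :=
      integral_mono hQ.integrableOn hQ.abs.integrableOn fun ω => le_abs_self _
    _ ≤ ∫ ω, |Q ω| ∂μ := setIntegral_le_integral hQ.abs (ae_of_all _ fun ω => abs_nonneg _)

lemma convex_setOf_integrable_dotProduct_mulVec (hm : m ≤ m0) {C : Ω → Matrix ι ι ℝ}
    (hC : ∀ᵐ ω ∂μ, (C ω).PosSemidef)
    (hCm : ∀ i j, AEStronglyMeasurable (fun ω => C ω i j) μ) :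
    Convex ℝ {v : Ω → ι → ℝ | StronglyMeasurable[m] v ∧ (∀ i, MemLp (fun ω => v ω i) 2 μ) ∧
      Integrable (fun ω => v ω ⬝ᵥ C ω *ᵥ v ω) μ} := by
  rintro v₁ ⟨hv₁, hv₁2, hQ₁⟩ v₂ ⟨hv₂, hv₂2, hQ₂⟩ a b ha hb hab
  have hv : StronglyMeasurable[m] (a • v₁ + b • v₂) := (hv₁.const_smul a).add (hv₂.const_smul b)
  refine ⟨hv, fun i => ((hv₁2 i).const_mul a).add ((hv₂2 i).const_mul b), ?_⟩
  refine ((hQ₁.const_mul a).add (hQ₂.const_mul b)).mono' ?_ ?_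
  · have := (hv.mono hm).aestronglyMeasurable (μ := μ)
    simp only [dotProduct, mulVec]
    fun_prop
  · filter_upwards [hC] with ω hω
    rw [Real.norm_of_nonneg (by simpa only [star_trivial] using hω.dotProduct_mulVec_nonneg _)]
    exact hω.convexOn_dotProduct_mulVec_self.2 trivial trivial ha hb hab

end CondMoments

section Estimators

variable {Ω : Type*} {m m0 : MeasurableSpace Ω} {μ : Measure Ω} {M : ℕ} {X v : Ω → Fin M → ℝ}

lemma memLp_two_apply_of_integrable_enorm2_pow_three [IsFiniteMeasure μ]
    (hX : ∀ i, AEMeasurable (fun ω => X ω i) μ)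
    (hX3 : Integrable (fun ω => enorm2 (X ω) ^ 3) μ) (i : Fin M) :
    MemLp (fun ω => X ω i) 2 μ := by
  rw [memLp_two_iff_integrable_sq (hX i).aestronglyMeasurable]
  refine ((integrable_const 1).add hX3).mono' ((hX i).pow_const 2).aestronglyMeasurable
    (ae_of_all _ fun ω => ?_)
  rw [Real.norm_of_nonneg (sq_nonneg _)]
  exact sq_apply_le_one_add_enorm2_pow_three (X ω) i

lemma condExp_dotProduct_ae_eq (hv : StronglyMeasurable[m] v)
    (hvX : ∀ i, Integrable (fun ω => v ω i * X ω i) μ) (hX : ∀ i, Integrable (fun ω => X ω i) μ) :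
    μ[fun ω => v ω ⬝ᵥ X ω|m] =ᵐ[μ] fun ω => v ω ⬝ᵥ fun i => (μ[fun ω' => X ω' i|m]) ω := by
  have hpull : ∀ i, μ[fun ω => v ω i * X ω i|m] =ᵐ[μ]
      fun ω => v ω i * (μ[fun ω' => X ω' i|m]) ω := fun i => by
    have := hv.measurable
    exact condExp_mul_of_stronglyMeasurable_left (by fun_prop) (hvX i) (hX i)
  have hsum : (fun ω => v ω ⬝ᵥ X ω) = ∑ i, fun ω => v ω i * X ω i := by
    ext ω
    rw [Finset.sum_apply]
    rfl
  rw [hsum]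
  filter_upwards [condExp_finsetSum (fun i _ => hvX i) m, ae_all_iff.2 hpull] with ω hsum hω
  rw [hsum, Finset.sum_apply]
  exact Finset.sum_congr rfl fun i _ => hω i

lemma sqn_sub_sub_condExp_ae_eq (hm : m ≤ m0) [IsFiniteMeasure μ]
    (hX : ∀ i, MemLp (fun ω => X ω i) 2 μ) (hv : StronglyMeasurable[m] v)
    (hv2 : ∀ i, MemLp (fun ω => v ω i) 2 μ) :
    (fun ω => sqn (X ω - v ω) - (μ[fun ω' => sqn (X ω' - v ω')|m]) ω) =ᵐ[μ]
      fun ω => (sqn (X ω) - (μ[fun ω' => sqn (X ω')|m]) ω)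
        - 2 * (v ω ⬝ᵥ condCenter m μ X ω) := by
  have hX1 : ∀ i, Integrable (fun ω => X ω i) μ := fun i => (hX i).integrable one_le_two
  have hvX : ∀ i, Integrable (fun ω => v ω i * X ω i) μ := fun i => (hv2 i).integrable_mul (hX i)
  have h1 : Integrable (fun ω => sqn (X ω)) μ :=
    integrable_finsetSum _ fun i _ => (hX i).integrable_sq
  have h2 : Integrable (fun ω => v ω ⬝ᵥ X ω) μ := integrable_finsetSum _ fun i _ => hvX i
  have h3 : Integrable (fun ω => sqn (v ω)) μ :=
    integrable_finsetSum _ fun i _ => (hv2 i).integrable_sq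
  have h3m : StronglyMeasurable[m] fun ω => sqn (v ω) := by
    have := hv.measurable
    unfold sqn
    fun_prop
  have hsplit : (fun ω => sqn (X ω - v ω)) =
      ((fun ω => sqn (X ω)) - (2 : ℝ) • fun ω => v ω ⬝ᵥ X ω) + fun ω => sqn (v ω) := by
    ext ω
    simp only [sqn_sub, Pi.add_apply, Pi.sub_apply, Pi.smul_apply, smul_eq_mul]
  rw [hsplit]
  filter_upwards [condExp_add (h1.sub (h2.smul (2 : ℝ))) h3 m,
    condExp_sub h1 (h2.smul (2 : ℝ)) m, condExp_smul (2 : ℝ) (fun ω => v ω ⬝ᵥ X ω) m,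
    condExp_dotProduct_ae_eq hv hvX hX1] with ω hadd hsub hsmul hdot
  rw [hadd, condExp_of_stronglyMeasurable hm h3m h3, Pi.add_apply, hsub, Pi.sub_apply, hsmul,
    Pi.smul_apply, hdot, sqn_sub]
  simp only [smul_eq_mul, condCenter, dotProduct, mul_sub, Finset.sum_sub_distrib]
  ring

lemma integral_condVar'_sqn_sub (hm : m ≤ m0) [IsFiniteMeasure μ]
    (hX : ∀ i, MemLp (fun ω => X ω i) 2 μ) (hv : StronglyMeasurable[m] v)
    (hv2 : ∀ i, MemLp (fun ω => v ω i) 2 μ) :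
    ∫ ω, condVar' m μ (fun ω' => sqn (X ω' - v ω')) ω ∂μ =
      ∫ ω, ((sqn (X ω) - (μ[fun ω' => sqn (X ω')|m]) ω)
        - 2 * (v ω ⬝ᵥ condCenter m μ X ω)) ^ 2 ∂μ := by
  rw [condVar', integral_condExp hm]
  exact integral_congr_ae ((sqn_sub_sub_condExp_ae_eq hm hX hv hv2).fun_comp (· ^ 2))

end Estimators

theorem stmt15_general {Ω : Type*} (m : MeasurableSpace Ω) [m0 : MeasurableSpace Ω] (hm : m ≤ m0)
    (μ : Measure Ω) [IsProbabilityMeasure μ] {M : ℕ}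
    (X : Ω → Fin M → ℝ)
    (hXmeas : ∀ i, AEMeasurable (fun ω => X ω i) μ)
    (hX3 : Integrable (fun ω => enorm2 (X ω) ^ 3) μ) :
    ConvexOn ℝ
      {Xhat : Ω → Fin M → ℝ |
        StronglyMeasurable[m] Xhat ∧
        (∀ i, MemLp (fun ω => Xhat ω i) 2 μ) ∧
        Integrable (fun ω => Xhat ω ⬝ᵥ (postCov m μ X ω).mulVec (Xhat ω)) μ}
      (fun Xhat =>
        ∫ ω, condVar' m μ (fun ω' => sqn (fun i => X ω' i - Xhat ω' i)) ω ∂μ) := by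
  have hX := memLp_two_apply_of_integrable_enorm2_pow_three hXmeas hX3
  have hB : ∀ i, MemLp (fun ω => condCenter m μ X ω i) 2 μ := fun i =>
    (hX i).sub ((hX i).condExp one_le_two)
  have hA : AEStronglyMeasurable (fun ω => sqn (X ω) - (μ[fun ω' => sqn (X ω')|m]) ω) μ := by
    have := fun i => (hXmeas i).aestronglyMeasurable
    have : AEStronglyMeasurable (μ[fun ω' => sqn (X ω')|m]) μ :=
      (stronglyMeasurable_condExp.mono hm).aestronglyMeasurable
    unfold sqn
    fun_prop
  rw [postCov_eq_condMomentMatrix]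
  refine (((convexOn_integral_sq_sub hA).comp_linearMap
    ((2 : ℝ) • pointwiseDotProductₗ (condCenter m μ X))).subset ?_
    (convex_setOf_integrable_dotProduct_mulVec hm (ae_posSemidef_condMomentMatrix hm hB)
      fun i j => (stronglyMeasurable_condExp.mono hm).aestronglyMeasurable)).congr ?_
  · rintro v ⟨hv, -, hQ⟩
    exact (memLp_two_dotProduct_of_integrable_dotProduct_mulVec hm hB hv hQ).const_smul (2 : ℝ)
  · rintro v ⟨hv, hv2, -⟩
    exact (integral_condVar'_sqn_sub hm hX hv hv2).symm

/-- The map `X̂ ↦ E[V_Y[‖X − X̂‖₂²]]` is a convex function on the set of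
`σ(Y)`-measurable square-integrable estimators with `E[X̂ᵀ Σ_{X|Y} X̂] < ∞` (being a sum
of a constant, a nonnegative quadratic form, and a linear functional); `m` plays the
role of `σ(Y)`. -/
theorem stmt15 {Ω : Type*} (m : MeasurableSpace Ω) [m0 : MeasurableSpace Ω] (hm : m ≤ m0)
    (μ : Measure Ω) [IsProbabilityMeasure μ] {M : ℕ}
    (X : Ω → Fin M → ℝ)
    (hXmeas : ∀ i, AEMeasurable (fun ω => X ω i) μ)
    (hX3 : Integrable (fun ω => enorm2 (X ω) ^ 3) μ)
    (hmom : MemLp (μ[(fun ω => enorm2 (X ω) ^ 3)|m]) 2 μ) :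
    ConvexOn ℝ
      {Xhat : Ω → Fin M → ℝ |
        StronglyMeasurable[m] Xhat ∧
        (∀ i, MemLp (fun ω => Xhat ω i) 2 μ) ∧
        Integrable (fun ω => Xhat ω ⬝ᵥ (postCov m μ X ω).mulVec (Xhat ω)) μ}
      (fun Xhat =>
        ∫ ω, condVar' m μ (fun ω' => sqn (fun i => X ω' i - Xhat ω' i)) ω ∂μ) :=
  stmt15_general m (m0 := m0) hm μ X hXmeas hX3
end
end
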